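/- Fix an integer p ≥ 2 and f ∈ 𝓕, and define g_f(κ) := ( ∫_{−1}^{1} s² (1−s²)^{(p−3)/2} f(κ s²) ds ) / ( ∫_{−1}^{1} (1−s²)^{(p−3)/2} f(κ s²) ds ) for κ in a neighbourhood of 0. Then g_f is differentiable at κ = 0 with g_f(0) = 1/p and g_f'(0) = 2(p−1)/(p²(p+2)) > 0. -/

import Mathlib

/-!
With `α = (p - 3) / 2` write `M n = ∫_{-1}^1 sⁿ (1 - s²)^α ds`. Since `|κ s²| ≤ |κ|` on `[-1, 1]`
and `f x - f 0 = O(x)` at `0`, one may differentiate under the integral sign: the numerator and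
the denominator of `g_f` take the values `M 2`, `M 0` and have the derivatives `M 4`, `M 2` at
`κ = 0`. Integrating the derivative of `s^(n+1) (1 - s²)^(α+1)`, which vanishes at `±1`, over
`[-1, 1]` gives `(n + 1) M n = (n + 2α + 3) M (n + 2)`, hence `M 0 = p M 2` and
`M 4 = 3 M 2 / (p + 2)`. The quotient rule then gives `g_f(0) = M 2 / M 0 = 1 / p` and
`g_f'(0) = (M 4 M 0 - M 2²) / M 0² = 3 / (p (p + 2)) - 1 / p² = 2 (p - 1) / (p² (p + 2))`.
-/

open MeasureTheory Filter Real
open scoped Topology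

noncomputable section

/-- `g_f(κ) = (∫_{-1}^1 s²(1-s²)^{(p-3)/2} f(κs²) ds) / (∫_{-1}^1 (1-s²)^{(p-3)/2} f(κs²) ds)`,
the expectation of `(X'θ)²` under the axial density with concentration `κ`. -/
def gOf (p : ℕ) (f : ℝ → ℝ) (κ : ℝ) : ℝ :=
  (∫ s in (-1:ℝ)..1, s ^ 2 * (1 - s ^ 2) ^ (((p : ℝ) - 3) / 2) * f (κ * s ^ 2)) /
    (∫ s in (-1:ℝ)..1, (1 - s ^ 2) ^ (((p : ℝ) - 3) / 2) * f (κ * s ^ 2))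

open Set intervalIntegral Metric ContinuousLinearMap

def oneSubSqMoment (α : ℝ) (n : ℕ) : ℝ :=
  ∫ s in (-1:ℝ)..1, s ^ n * (1 - s ^ 2) ^ α

section Moments

variable {α : ℝ}

theorem intervalIntegrable_one_sub_sq_rpow (hα : -1 < α) :
    IntervalIntegrable (fun s : ℝ => (1 - s ^ 2) ^ α) volume (-1) 1 := by
  have h_one_sub : IntervalIntegrable (fun s : ℝ => (1 - s) ^ α) volume 0 1 :=
    (by simpa using (intervalIntegrable_rpow' hα (a := 0) (b := 1)).comp_sub_left 1 :
      IntervalIntegrable (fun s : ℝ => (1 - s) ^ α) volume 1 0).symm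
  have h_one_add : ContinuousOn (fun s : ℝ => (1 + s) ^ α) (uIcc 0 1) := by
    refine ContinuousOn.rpow_const (by fun_prop) fun s hs => Or.inl ?_
    rw [uIcc_of_le zero_le_one] at hs
    linarith [hs.1]
  have h_right : IntervalIntegrable (fun s : ℝ => (1 - s ^ 2) ^ α) volume 0 1 := by
    refine (h_one_sub.mul_continuousOn h_one_add).congr fun s hs => ?_
    rw [uIoc_of_le zero_le_one] at hs
    rw [← mul_rpow (by linarith [hs.2]) (by linarith [hs.1])]
    ring_nf
  have h_left : IntervalIntegrable (fun s : ℝ => (1 - s ^ 2) ^ α) volume 0 (-1) := by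
    simpa using (IntervalIntegrable.iff_comp_neg (a := 0) (b := 1)).1 h_right
  exact h_left.symm.trans h_right

theorem intervalIntegrable_pow_mul_one_sub_sq_rpow (hα : -1 < α) (n : ℕ) :
    IntervalIntegrable (fun s : ℝ => s ^ n * (1 - s ^ 2) ^ α) volume (-1) 1 :=
  (intervalIntegrable_one_sub_sq_rpow hα).continuousOn_mul (continuous_pow n).continuousOn

theorem oneSubSqMoment_zero_pos (hα : -1 < α) : 0 < oneSubSqMoment α 0 := by
  refine intervalIntegral_pos_of_pos_on (intervalIntegrable_pow_mul_one_sub_sq_rpow hα 0)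
    (fun s hs => ?_) (by norm_num)
  have : 0 < 1 - s ^ 2 := by nlinarith [hs.1, hs.2]
  positivity

theorem hasDerivAt_pow_succ_mul_one_sub_sq_rpow (n : ℕ) {s : ℝ} (hs : s ∈ Ioo (-1) 1) :
    HasDerivAt (fun s : ℝ => s ^ (n + 1) * (1 - s ^ 2) ^ (α + 1))
      ((n + 1) * (s ^ n * (1 - s ^ 2) ^ α) - (n + 2 * α + 3) * (s ^ (n + 2) * (1 - s ^ 2) ^ α))
      s := by
  have hw : 1 - s ^ 2 ≠ 0 := by nlinarith [hs.1, hs.2]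
  have h := (hasDerivAt_pow (n + 1) s).mul
    (((hasDerivAt_pow 2 s).const_sub 1).rpow_const (p := α + 1) (Or.inl hw))
  refine h.congr_deriv ?_
  rw [add_sub_cancel_right, rpow_add_one hw]
  push_cast
  ring

theorem oneSubSqMoment_recurrence (hα : -1 < α) (n : ℕ) :
    (n + 1) * oneSubSqMoment α n = (n + 2 * α + 3) * oneSubSqMoment α (n + 2) := by
  have hF : Continuous fun s : ℝ => s ^ (n + 1) * (1 - s ^ 2) ^ (α + 1) :=
    (continuous_pow _).mul ((by fun_prop : Continuous fun s : ℝ => 1 - s ^ 2).rpow_const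
      fun _ => Or.inr (by linarith))
  have hn := intervalIntegrable_pow_mul_one_sub_sq_rpow hα n
  have hn2 := intervalIntegrable_pow_mul_one_sub_sq_rpow hα (n + 2)
  have h := integral_eq_sub_of_hasDerivAt_of_le (by norm_num) hF.continuousOn
    (fun s hs => hasDerivAt_pow_succ_mul_one_sub_sq_rpow n hs)
    ((hn.const_mul (n + 1)).sub (hn2.const_mul (n + 2 * α + 3)))
  rw [integral_sub (hn.const_mul _) (hn2.const_mul _), intervalIntegral.integral_const_mul,
    intervalIntegral.integral_const_mul] at h
  norm_num [zero_rpow (by linarith : α + 1 ≠ 0)] at h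
  unfold oneSubSqMoment
  linarith

theorem oneSubSqMoment_zero_eq {p : ℝ} (hp : 1 < p) :
    oneSubSqMoment ((p - 3) / 2) 0 = p * oneSubSqMoment ((p - 3) / 2) 2 := by
  have h := oneSubSqMoment_recurrence (α := (p - 3) / 2) (by linarith) 0
  norm_num at h
  linarith

theorem oneSubSqMoment_four_eq {p : ℝ} (hp : 1 < p) :
    oneSubSqMoment ((p - 3) / 2) 4 = 3 * oneSubSqMoment ((p - 3) / 2) 2 / (p + 2) := by
  have h := oneSubSqMoment_recurrence (α := (p - 3) / 2) (by linarith) 2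
  rw [eq_div_iff (by linarith)]
  norm_num at h
  linarith

end Moments

theorem hasDerivAt_integral_mul_comp_mul_sq {w f : ℝ → ℝ} {f' : ℝ}
    (hw : IntervalIntegrable w volume (-1) 1) (hf : Measurable f) (hf' : HasDerivAt f f' 0) :
    HasDerivAt (fun κ => ∫ s in (-1:ℝ)..1, w s * f (κ * s ^ 2))
      (f' * ∫ s in (-1:ℝ)..1, s ^ 2 * w s) 0 := by
  obtain ⟨C, hC0, hC⟩ := hf'.isBigO_sub.exists_pos
  obtain ⟨δ, hδ, hfC⟩ := eventually_nhds_iff_ball.1 hC.bound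
  set μ := volume.restrict (Ioc (-1:ℝ) 1)
  have hwμ : Integrable w μ := (intervalIntegrable_iff_integrableOn_Ioc_of_le (by norm_num)).1 hw
  have h_lip : ∀ᵐ s ∂μ, ∀ κ ∈ ball (0:ℝ) δ,
      ‖w s * f (κ * s ^ 2) - w s * f (0 * s ^ 2)‖ ≤ C * |w s| * ‖κ - 0‖ := by
    refine (ae_restrict_mem measurableSet_Ioc).mono fun s hs κ hκ => ?_
    have hκs : ‖κ * s ^ 2‖ ≤ ‖κ‖ := by
      rw [norm_mul, norm_pow, Real.norm_eq_abs, Real.norm_eq_abs, sq_abs]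
      exact mul_le_of_le_one_right (abs_nonneg κ) (by nlinarith [hs.1, hs.2])
    have hfκ := hfC (κ * s ^ 2) (mem_ball_zero_iff.2 (hκs.trans_lt (mem_ball_zero_iff.1 hκ)))
    calc ‖w s * f (κ * s ^ 2) - w s * f (0 * s ^ 2)‖
        = |w s| * ‖f (κ * s ^ 2) - f 0‖ := by
          rw [zero_mul, ← mul_sub, norm_mul, Real.norm_eq_abs]
      _ ≤ |w s| * (C * ‖κ‖) := by
          gcongr
          rw [sub_zero] at hfκ
          exact hfκ.trans (by gcongr)
      _ = C * |w s| * ‖κ - 0‖ := by rw [sub_zero]; ring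
  have h_diff : ∀ᵐ s ∂μ, HasFDerivAt (fun κ => w s * f (κ * s ^ 2))
      (toSpanSingleton ℝ (w s * (f' * s ^ 2))) 0 :=
    ae_of_all _ fun s => ((hf'.comp_of_eq 0 (hasDerivAt_mul_const (s ^ 2))
      (zero_mul _).symm).const_mul (w s)).hasFDerivAt
  obtain ⟨h_int, h_deriv⟩ := hasFDerivAt_integral_of_dominated_loc_of_lip' (μ := μ)
    (F := fun κ s => w s * f (κ * s ^ 2))
    (F' := fun s => toSpanSingleton ℝ (w s * (f' * s ^ 2)))
    (bound := fun s => C * |w s|)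
    (ball_mem_nhds 0 hδ)
    (fun κ _ => hwμ.aestronglyMeasurable.mul (hf.comp (by fun_prop)).aestronglyMeasurable)
    (by simpa using hwμ.mul_const (f 0))
    ((toSpanSingletonCLE (𝕜 := ℝ) (E := ℝ)).continuous.comp_aestronglyMeasurable
      (hwμ.aestronglyMeasurable.mul
        (by fun_prop : Continuous fun s : ℝ => f' * s ^ 2).aestronglyMeasurable))
    h_lip (hwμ.norm.const_mul C) h_diff
  simp only [integral_of_le (show (-1:ℝ) ≤ 1 by norm_num)]
  refine h_deriv.hasDerivAt.congr_deriv ?_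
  rw [integral_apply h_int, ← MeasureTheory.integral_const_mul]
  refine integral_congr_ae (ae_of_all _ fun s => ?_)
  simp only [toSpanSingleton_apply, smul_eq_mul]
  ring

theorem gOf_zero_eq {p : ℕ} {f : ℝ → ℝ} (hf0 : f 0 = 1) :
    gOf p f 0 = oneSubSqMoment (((p:ℝ) - 3) / 2) 2 / oneSubSqMoment (((p:ℝ) - 3) / 2) 0 := by
  simp [gOf, oneSubSqMoment, hf0]

theorem hasDerivAt_gOf_zero {p : ℕ} (hp : 1 < (p:ℝ)) {f : ℝ → ℝ} (hf : Measurable f)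
    (hf0 : f 0 = 1) (hf' : HasDerivAt f 1 0) :
    HasDerivAt (gOf p f)
      ((oneSubSqMoment (((p:ℝ) - 3) / 2) 4 * oneSubSqMoment (((p:ℝ) - 3) / 2) 0 -
          oneSubSqMoment (((p:ℝ) - 3) / 2) 2 * oneSubSqMoment (((p:ℝ) - 3) / 2) 2) /
        oneSubSqMoment (((p:ℝ) - 3) / 2) 0 ^ 2) 0 := by
  have hα : -1 < ((p:ℝ) - 3) / 2 := by linarith
  set α : ℝ := ((p:ℝ) - 3) / 2
  have hN := hasDerivAt_integral_mul_comp_mul_sq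
    (intervalIntegrable_pow_mul_one_sub_sq_rpow hα 2) hf hf'
  have hD := hasDerivAt_integral_mul_comp_mul_sq (intervalIntegrable_one_sub_sq_rpow hα) hf hf'
  have hD0 : ∫ s in (-1:ℝ)..1, (1 - s ^ 2) ^ α * f (0 * s ^ 2) = oneSubSqMoment α 0 := by
    simp [oneSubSqMoment, hf0]
  have hN0 :
      ∫ s in (-1:ℝ)..1, s ^ 2 * (1 - s ^ 2) ^ α * f (0 * s ^ 2) = oneSubSqMoment α 2 := by
    simp [oneSubSqMoment, hf0]
  have hM4 : ∫ s in (-1:ℝ)..1, s ^ 2 * (s ^ 2 * (1 - s ^ 2) ^ α) = oneSubSqMoment α 4 :=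
    integral_congr fun s _ => by ring
  have hquot := hN.div hD (hD0 ▸ (oneSubSqMoment_zero_pos hα).ne')
  rw [hD0, hN0, hM4, one_mul, one_mul] at hquot
  exact hquot

theorem gOf_hasDerivAt_zero_general
    (p : ℕ) (hp : 2 ≤ p)
    (f : ℝ → ℝ) (hf_mono : Monotone f)
    (hf0 : f 0 = 1) (hf'0 : deriv f 0 = 1) :
    gOf p f 0 = 1 / (p:ℝ) ∧
    HasDerivAt (gOf p f) (2 * ((p:ℝ) - 1) / ((p:ℝ) ^ 2 * ((p:ℝ) + 2))) 0 ∧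
    0 < 2 * ((p:ℝ) - 1) / ((p:ℝ) ^ 2 * ((p:ℝ) + 2)) := by
  have hp' : (1:ℝ) < p := by exact_mod_cast hp
  have hf' : HasDerivAt f 1 0 :=
    hf'0 ▸ (differentiableAt_of_deriv_ne_zero (by simp [hf'0])).hasDerivAt
  have hM0 := oneSubSqMoment_zero_eq hp'
  have hM0_pos := oneSubSqMoment_zero_pos (α := ((p:ℝ) - 3) / 2) (by linarith)
  have hM2_ne := right_ne_zero_of_mul (hM0 ▸ hM0_pos.ne')
  refine ⟨?_, ?_, div_pos (by linarith) (by positivity)⟩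
  · rw [gOf_zero_eq hf0, hM0]
    field_simp
  · convert hasDerivAt_gOf_zero hp' hf_mono.measurable hf0 hf' using 1
    rw [hM0, oneSubSqMoment_four_eq hp']
    field_simp
    ring

/-- differentiability of `g_f` at `0`.
For `f ∈ 𝓕`, `g_f(0) = 1/p` and `g_f` is differentiable at `0` with derivative
`g_f'(0) = 2(p-1)/(p²(p+2)) > 0`. -/
theorem gOf_hasDerivAt_zero
    (p : ℕ) (hp : 2 ≤ p)
    (f : ℝ → ℝ) (hf_pos : ∀ x, 0 < f x) (hf_mono : Monotone f)
    (hf_diff : ∀ᶠ x in 𝓝 (0:ℝ), DifferentiableAt ℝ f x)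
    (hf_diff2 : DifferentiableAt ℝ (deriv f) 0)
    (hf0 : f 0 = 1) (hf'0 : deriv f 0 = 1) :
    gOf p f 0 = 1 / (p:ℝ) ∧
    HasDerivAt (gOf p f) (2 * ((p:ℝ) - 1) / ((p:ℝ) ^ 2 * ((p:ℝ) + 2))) 0 ∧
    0 < 2 * ((p:ℝ) - 1) / ((p:ℝ) ^ 2 * ((p:ℝ) + 2)) :=
  gOf_hasDerivAt_zero_general p hp f hf_mono hf0 hf'0

end
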